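/- arXiv:1609.07862 — 4 statements merged into one kernel-verified Lean document; each statement's English description precedes it below -/
import Mathlib

section
/- Let C be a linear code over R = F_p[u]/⟨u^m − u⟩ of length n (an R-submodule of R^n), and let Φ : R^n → F_p^{mn} be the Gray map given componentwise by r ↦ (coefficient vector of r) · M · V, where M is the evaluation matrix and V is an invertible m×m matrix over F_p with V Vᵀ = λ I_m, λ ≠ 0. If C is self-dual with respect to the Euclidean inner product on R^n, then Φ(C) is self-orthogonal in F_p^{mn}: for all c₁, c₂ ∈ C, Φ(c₁) · Φ(c₂) = 0. -/
open Polynomial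

lemma monic_Xm_sub_X (p m : ℕ) [Fact p.Prime] (hm : 2 ≤ m) : ((X : (ZMod p)[X]) ^ m - X).Monic := by
  refine (monic_X_pow m).sub_of_left ?_
  rw [degree_X, degree_X_pow]
  exact_mod_cast (by omega : 1 < m)

/-- The evaluation matrix `M`. -/
def evalM (p m : ℕ) (ξ : ZMod p) : Matrix (Fin m) (Fin m) (ZMod p) :=
  Matrix.of fun k j =>
    if (j : ℕ) = 0 then (if (k : ℕ) = 0 then 1 else 0) else (ξ ^ ((j : ℕ) - 1)) ^ (k : ℕ)

/-- The Gray map on one component: take the coefficient vector of the (unique) representative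
of degree `< m` and multiply by `M * V`. -/
noncomputable def gray (p m : ℕ) [Fact p.Prime] (hm : 2 ≤ m) (ξ : ZMod p)
    (V : Matrix (Fin m) (Fin m) (ZMod p))
    (r : AdjoinRoot ((X : (ZMod p)[X]) ^ m - X)) : Fin m → ZMod p :=
  Matrix.vecMul
    (fun k : Fin m => (AdjoinRoot.modByMonicHom (monic_Xm_sub_X p m hm) r).coeff (k : ℕ))
    (evalM p m ξ * V)

/-!
At the `j`-th evaluation point `0, 1, ξ, …, ξ^(m-2)` (all roots of `X^m - X`), the coefficient
vector times `M` is the evaluation of `r`, so the Gray image of `r` is `ev(r) V` for a ring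
homomorphism `ev : R → F_p^m`. Since `V Vᵀ = λ I`, `Φ(r) · Φ(s) = λ ∑_j ev(r s)_j`, and summing over
the coordinates of `c₁, c₂ ∈ C` gives `λ ∑_j ev(c₁ · c₂)_j = 0` by self-orthogonality of `C`.
-/

open Matrix

theorem dotProduct_vecMul_vecMul_of_mul_transpose_eq_smul {R ι : Type*} [CommRing R] [Fintype ι]
    [DecidableEq ι] {V : Matrix ι ι R} {lam : R} (hV : V * Vᵀ = lam • 1) (x y : ι → R) :
    (x ᵥ* V) ⬝ᵥ (y ᵥ* V) = lam * (x ⬝ᵥ y) := by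
  rw [← mulVec_transpose V y, dotProduct_mulVec, vecMul_vecMul, hV, vecMul_smul, vecMul_one,
    smul_dotProduct, smul_eq_mul]

theorem sum_dotProduct_map_eq_zero {A R ι n : Type*} [CommSemiring A] [CommSemiring R]
    [Fintype ι] [Fintype n] (φ : A →+* ι → R) {c₁ c₂ : n → A} (h : ∑ i, c₁ i * c₂ i = 0) :
    ∑ i, φ (c₁ i) ⬝ᵥ φ (c₂ i) = 0 := by
  have hmul : ∀ a b, φ a ⬝ᵥ φ b = ∑ j, φ (a * b) j := fun a b => by
    simp only [dotProduct, map_mul, Pi.mul_apply]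
  have hsum : ∀ j, ∑ i, φ (c₁ i * c₂ i) j = φ (∑ i, c₁ i * c₂ i) j := fun j => by
    rw [map_sum, Finset.sum_apply]
  simp only [hmul]
  rw [Finset.sum_comm]
  simp only [hsum, h, map_zero, Pi.zero_apply, Finset.sum_const_zero]

theorem Polynomial.sum_fin_coeff_mul_pow {R : Type*} [CommSemiring R] {q : R[X]} {m : ℕ}
    (hq : q.natDegree < m) (x : R) : ∑ k : Fin m, q.coeff k * x ^ (k : ℕ) = q.eval x := by
  rw [eval_eq_sum_range' hq, Fin.sum_univ_eq_sum_range (fun k => q.coeff k * x ^ k)]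

theorem AdjoinRoot.lift_eq_eval_modByMonicHom {R : Type*} [CommRing R] {f : R[X]} (hf : f.Monic)
    {x : R} (hx : f.eval₂ (RingHom.id R) x = 0) (r : AdjoinRoot f) :
    AdjoinRoot.lift (RingHom.id R) x hx r = (AdjoinRoot.modByMonicHom hf r).eval x := by
  conv_lhs => rw [← AdjoinRoot.mk_leftInverse hf r]
  exact AdjoinRoot.lift_mk hx _

theorem AdjoinRoot.natDegree_modByMonicHom_lt {R : Type*} [CommRing R] {f : R[X]} (hf : f.Monic)
    (hf1 : f ≠ 1) (r : AdjoinRoot f) : (AdjoinRoot.modByMonicHom hf r).natDegree < f.natDegree := by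
  obtain ⟨g, rfl⟩ := AdjoinRoot.mk_surjective r
  rw [AdjoinRoot.modByMonicHom_mk]
  exact natDegree_modByMonic_lt g hf hf1

theorem pow_pow_self_of_pow_pred_eq_one {M : Type*} [Monoid M] {x : M} {m : ℕ} (hm : m ≠ 0)
    (hx : x ^ (m - 1) = 1) (k : ℕ) : (x ^ k) ^ m = x ^ k := by
  obtain ⟨m, rfl⟩ := Nat.exists_eq_succ_of_ne_zero hm
  rw [Nat.succ_sub_one] at hx
  rw [pow_succ, pow_right_comm, hx, one_pow, one_mul]

def grayPoint {R : Type*} [MonoidWithZero R] {m : ℕ} (ξ : R) (j : Fin m) : R :=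
  if (j : ℕ) = 0 then 0 else ξ ^ ((j : ℕ) - 1)

theorem grayPoint_pow_self {R : Type*} [MonoidWithZero R] {m : ℕ} {ξ : R} (hm : m ≠ 0)
    (hξ : ξ ^ (m - 1) = 1) (j : Fin m) : grayPoint ξ j ^ m = grayPoint ξ j := by
  unfold grayPoint
  split
  · exact zero_pow hm
  · exact pow_pow_self_of_pow_pred_eq_one hm hξ _

theorem evalM_apply_eq_grayPoint_pow (p m : ℕ) (ξ : ZMod p) (k j : Fin m) :
    evalM p m ξ k j = grayPoint ξ j ^ (k : ℕ) := by
  by_cases hj : (j : ℕ) = 0 <;> simp [evalM, grayPoint, hj, zero_pow_eq]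

noncomputable def grayEval {K : Type*} [CommRing K] {m : ℕ} (ξ : K) (hm : m ≠ 0)
    (hξ : ξ ^ (m - 1) = 1) : AdjoinRoot ((X : K[X]) ^ m - X) →+* (Fin m → K) :=
  RingHom.pi fun j => AdjoinRoot.lift (RingHom.id K) (grayPoint ξ j)
    (by simp [grayPoint_pow_self hm hξ j])

theorem gray_eq_grayEval_vecMul {p m : ℕ} [Fact p.Prime] (hm : 2 ≤ m) {ξ : ZMod p}
    (hξ : ξ ^ (m - 1) = 1) (V : Matrix (Fin m) (Fin m) (ZMod p))
    (r : AdjoinRoot ((X : (ZMod p)[X]) ^ m - X)) :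
    gray p m hm ξ V r = grayEval ξ (by omega) hξ r ᵥ* V := by
  have hdeg := FiniteField.X_pow_card_sub_X_natDegree_eq (ZMod p) (by omega : 1 < m)
  have hne : (X : (ZMod p)[X]) ^ m - X ≠ 1 := fun h => by
    rw [h, natDegree_one] at hdeg; omega
  have hlt : (AdjoinRoot.modByMonicHom (monic_Xm_sub_X p m hm) r).natDegree < m :=
    (AdjoinRoot.natDegree_modByMonicHom_lt _ hne r).trans_eq hdeg
  rw [gray, ← vecMul_vecMul]
  congr 1
  ext j
  simp only [vecMul, dotProduct, evalM_apply_eq_grayPoint_pow, grayEval, RingHom.pi_apply,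
    AdjoinRoot.lift_eq_eval_modByMonicHom (monic_Xm_sub_X p m hm), sum_fin_coeff_mul_pow hlt]

theorem stmt7_general (p m n : ℕ) [Fact p.Prime] (hm : 2 ≤ m)
    (ξ : ZMod p) (hord : orderOf ξ = m - 1)
    (V : Matrix (Fin m) (Fin m) (ZMod p))
    (lam : ZMod p)
    (hV : V * V.transpose = lam • (1 : Matrix (Fin m) (Fin m) (ZMod p)))
    (C : Submodule (AdjoinRoot ((X : (ZMod p)[X]) ^ m - X))
      (Fin n → AdjoinRoot ((X : (ZMod p)[X]) ^ m - X)))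
    (hC : ∀ x, x ∈ C ↔ ∀ y ∈ C, ∑ i, x i * y i = 0) :
    ∀ c₁ ∈ C, ∀ c₂ ∈ C,
      ∑ i, dotProduct (gray p m hm ξ V (c₁ i)) (gray p m hm ξ V (c₂ i)) = 0 := by
  intro c₁ hc₁ c₂ hc₂
  have hξ : ξ ^ (m - 1) = 1 := hord ▸ pow_orderOf_eq_one ξ
  have horth : ∑ i, c₁ i * c₂ i = 0 := (hC c₁).mp hc₁ c₂ hc₂
  simp only [gray_eq_grayEval_vecMul hm hξ, dotProduct_vecMul_vecMul_of_mul_transpose_eq_smul hV,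
    ← Finset.mul_sum, sum_dotProduct_map_eq_zero _ horth, mul_zero]

theorem stmt7 (p m n : ℕ) [Fact p.Prime] (hm : 2 ≤ m) (hdvd : (m - 1) ∣ (p - 1))
    (ξ : ZMod p) (hord : orderOf ξ = m - 1)
    (V : Matrix (Fin m) (Fin m) (ZMod p)) (hVinv : IsUnit V.det)
    (lam : ZMod p) (hlam : lam ≠ 0)
    (hV : V * V.transpose = lam • (1 : Matrix (Fin m) (Fin m) (ZMod p)))
    (C : Submodule (AdjoinRoot ((X : (ZMod p)[X]) ^ m - X))
      (Fin n → AdjoinRoot ((X : (ZMod p)[X]) ^ m - X)))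
    (hC : ∀ x, x ∈ C ↔ ∀ y ∈ C, ∑ i, x i * y i = 0) :
    ∀ c₁ ∈ C, ∀ c₂ ∈ C,
      ∑ i, dotProduct (gray p m hm ξ V (c₁ i)) (gray p m hm ξ V (c₂ i)) = 0 :=
  stmt7_general p m n hm ξ hord V lam hV C hC
end

section
/- Let S be a finite commutative ring and let C be an ideal of S[x]/⟨x^n − 1⟩ generated by an idempotent E (so E² = E and C = ⟨E⟩). Then the dual code C^⊥ (with respect to the Euclidean inner product on S^n, identifying polynomials with coefficient vectors) is the ideal generated by the idempotent 1 − E(x^{−1}), where E(x^{−1}) denotes E with x replaced by x^{n−1}. -/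
/-! The Euclidean inner product of coefficient vectors is `⟨a, b⟩ = [x⁰] a(x) b(x⁻¹)` in
`S[x]/(x^n - 1)`, because `x^i x^(-j)` has a nonzero constant term exactly when `i = j`.
Hence `f ⊥ (E)` iff the constant term of `f(x) E(x⁻¹) r(x⁻¹)` vanishes for every `r`; taking
`r = x^k` reads off the `k`-th coefficient of `f(x) E(x⁻¹)`, so this says `f(x) E(x⁻¹) = 0`.
Since `E(x⁻¹)` is again idempotent, its annihilator is the ideal generated by `1 - E(x⁻¹)`. -/

open Polynomial

lemma monic_Xn_sub_one (S : Type*) [CommRing S] (n : ℕ) (hn : 0 < n) :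
    ((X : S[X]) ^ n - 1).Monic := by
  have h := monic_X_pow_sub_C (1 : S) (by omega : n ≠ 0)
  simpa using h

lemma Nat.dvd_add_pred_mul_iff {n i j : ℕ} (hi : i < n) (hj : j < n) :
    n ∣ i + (n - 1) * j ↔ i = j := by
  have h : ((i + (n - 1) * j : ℕ) : ℤ) = (i - j : ℤ) + n * j := by
    push_cast [Nat.cast_sub (by omega : 1 ≤ n)]
    ring
  rw [← Int.natCast_dvd_natCast, h, dvd_add_left (dvd_mul_right _ _)]
  refine ⟨fun hd ↦ ?_, fun hij ↦ by simp [hij]⟩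
  have := Int.eq_zero_of_abs_lt_dvd hd (by rw [abs_lt]; omega)
  omega

lemma IsIdempotentElem.mem_span_one_sub_iff {R : Type*} [CommRing R] {e x : R}
    (he : IsIdempotentElem e) : x ∈ Ideal.span {1 - e} ↔ x * e = 0 := by
  rw [← he.ker_toSpanSingleton_eq_span, LinearMap.mem_ker, LinearMap.toSpanSingleton_apply,
    smul_eq_mul]

namespace CyclicCode

variable {S : Type*} [CommRing S] {n : ℕ}

local notation "𝓡" => AdjoinRoot ((X : S[X]) ^ n - 1)
local notation "ζ" => AdjoinRoot.root ((X : S[X]) ^ n - 1)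

lemma root_pow_self : ζ ^ n = 1 := by
  have h : AdjoinRoot.mk ((X : S[X]) ^ n - 1) (X ^ n - 1) = 0 := AdjoinRoot.mk_self
  rwa [map_sub, map_pow, AdjoinRoot.mk_X, map_one, sub_eq_zero] at h

lemma root_pow_mod (m : ℕ) : ζ ^ m = ζ ^ (m % n) := by
  conv_lhs => rw [← Nat.div_add_mod m n, pow_add, pow_mul, root_pow_self, one_pow, one_mul]

lemma aeval_root_pow_pred : aeval (ζ ^ (n - 1)) ((X : S[X]) ^ n - 1) = 0 := by
  rw [map_sub, map_pow, aeval_X, map_one, pow_right_comm, root_pow_self, one_pow, sub_self]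

variable (S n) in
-- `x ↦ x⁻¹ = x ^ (n - 1)`, so that `inversion S n E` is the paper's `E(x⁻¹)`.
noncomputable def inversion : 𝓡 →ₐ[S] 𝓡 :=
  AdjoinRoot.liftAlgHom _ (Algebra.ofId S _) (ζ ^ (n - 1))
    (by rw [Algebra.toRingHom_ofId, ← aeval_def]; exact aeval_root_pow_pred)

lemma inversion_root_pow (k : ℕ) : inversion S n (ζ ^ k) = ζ ^ ((n - 1) * k) := by
  rw [map_pow, inversion, AdjoinRoot.liftAlgHom_root, pow_mul]

variable (hn : 0 < n)

local notation "ρ" => AdjoinRoot.modByMonicHom (monic_Xn_sub_one S n hn)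

lemma aeval_modByMonicHom (a : 𝓡) : aeval (ζ ^ (n - 1)) (ρ a) = inversion S n a := by
  conv_rhs => rw [← AdjoinRoot.mk_leftInverse (monic_Xn_sub_one S n hn) a]
  rfl

lemma natDegree_modByMonicHom_lt (a : 𝓡) : (ρ a).natDegree < n := by
  rcases subsingleton_or_nontrivial S with hS | hS
  · rwa [Subsingleton.elim (ρ a) 0, natDegree_zero]
  obtain ⟨p, rfl⟩ := AdjoinRoot.mk_surjective a
  have hdeg : ((X : S[X]) ^ n - 1).natDegree = n := by
    simpa using natDegree_X_pow_sub_C (n := n) (r := (1 : S))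
  have h := natDegree_modByMonic_lt p (monic_Xn_sub_one S n hn) (by
    intro h; simp [h] at hdeg; omega)
  rwa [hdeg] at h

lemma modByMonicHom_root_pow (m : ℕ) : ρ (ζ ^ m) = X ^ (m % n) := by
  nontriviality S
  rw [root_pow_mod, ← AdjoinRoot.mk_X, ← map_pow, AdjoinRoot.modByMonicHom_mk,
    (modByMonic_eq_self_iff (monic_Xn_sub_one S n hn)).2]
  rw [degree_X_pow, ← C_1, degree_X_pow_sub_C hn]
  exact_mod_cast Nat.mod_lt m hn

lemma sum_coeff_smul_root_pow (a : 𝓡) :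
    ∑ k ∈ Finset.range n, (ρ a).coeff k • ζ ^ k = a := by
  conv_rhs => rw [← AdjoinRoot.mk_leftInverse (monic_Xn_sub_one S n hn) a,
    ← AdjoinRoot.aeval_eq, aeval_eq_sum_range' (natDegree_modByMonicHom_lt hn a)]

lemma coeff_zero_modByMonicHom_root_pow (m : ℕ) :
    (ρ (ζ ^ m)).coeff 0 = if n ∣ m then 1 else 0 := by
  simp [modByMonicHom_root_pow hn, coeff_X_pow, Nat.dvd_iff_mod_eq_zero, eq_comm]

lemma sum_coeff_mul_coeff_eq_coeff_zero_mul_inversion (a b : 𝓡) :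
    ∑ k ∈ Finset.range n, (ρ a).coeff k * (ρ b).coeff k =
      (ρ (a * inversion S n b)).coeff 0 := by
  let τ : 𝓡 →ₗ[S] S := (lcoeff S 0).comp ρ
  change _ = τ (a * inversion S n b)
  conv_rhs => rw [← sum_coeff_smul_root_pow hn a, ← sum_coeff_smul_root_pow hn b]
  simp only [map_sum, map_smul, inversion_root_pow, Finset.sum_mul_sum, smul_mul_smul_comm,
    ← pow_add, smul_eq_mul]
  refine Finset.sum_congr rfl fun i hi ↦ ?_
  simp only [τ, LinearMap.comp_apply, lcoeff_apply, coeff_zero_modByMonicHom_root_pow hn]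
  rw [Finset.sum_congr rfl fun j hj ↦ by rw [if_congr
    (Nat.dvd_add_pred_mul_iff (Finset.mem_range.1 hi) (Finset.mem_range.1 hj)) rfl rfl]]
  simp [hi]

lemma coeff_eq_coeff_zero_mul_inversion_root_pow (a : 𝓡) {k : ℕ} (hk : k < n) :
    (ρ a).coeff k = (ρ (a * inversion S n (ζ ^ k))).coeff 0 := by
  rw [← sum_coeff_mul_coeff_eq_coeff_zero_mul_inversion hn, modByMonicHom_root_pow hn,
    Nat.mod_eq_of_lt hk]
  simp [coeff_X_pow, hk]

lemma forall_mem_span_singleton_sum_coeff_mul_coeff_eq_zero_iff (f E : 𝓡) :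
    (∀ g ∈ Ideal.span {E}, ∑ k ∈ Finset.range n, (ρ f).coeff k * (ρ g).coeff k = 0) ↔
      f * inversion S n E = 0 := by
  simp only [sum_coeff_mul_coeff_eq_coeff_zero_mul_inversion hn]
  refine ⟨fun h ↦ ?_, fun h g hg ↦ ?_⟩
  · have hρ : ρ (f * inversion S n E) = 0 := by
      ext k
      rw [coeff_zero]
      rcases lt_or_ge k n with hk | hk
      · rw [coeff_eq_coeff_zero_mul_inversion_root_pow hn _ hk, mul_right_comm, mul_assoc,
          ← map_mul]
        exact h _ (Ideal.mul_mem_left _ _ (Ideal.mem_span_singleton_self E))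
      · exact coeff_eq_zero_of_natDegree_lt ((natDegree_modByMonicHom_lt hn _).trans_le hk)
    rw [← AdjoinRoot.mk_leftInverse (monic_Xn_sub_one S n hn) (f * inversion S n E), hρ,
      map_zero]
  · obtain ⟨c, rfl⟩ := Ideal.mem_span_singleton'.1 hg
    rw [map_mul (inversion S n), mul_left_comm, h, mul_zero, map_zero, coeff_zero]

end CyclicCode

theorem stmt8_general (S : Type*) [CommRing S] (n : ℕ) (hn : 0 < n)
    (E : AdjoinRoot ((X : S[X]) ^ n - 1)) (hE : E ^ 2 = E) :
    ∀ f : AdjoinRoot ((X : S[X]) ^ n - 1),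
      (∀ g ∈ Ideal.span {E},
          ∑ k ∈ Finset.range n,
            (AdjoinRoot.modByMonicHom (monic_Xn_sub_one S n hn) f).coeff k *
              (AdjoinRoot.modByMonicHom (monic_Xn_sub_one S n hn) g).coeff k = 0) ↔
        f ∈ Ideal.span
          {1 - Polynomial.aeval ((AdjoinRoot.root ((X : S[X]) ^ n - 1)) ^ (n - 1))
              (AdjoinRoot.modByMonicHom (monic_Xn_sub_one S n hn) E)} := by
  intro f
  have hE' : IsIdempotentElem E := by rwa [sq] at hE
  rw [CyclicCode.forall_mem_span_singleton_sum_coeff_mul_coeff_eq_zero_iff hn,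
    CyclicCode.aeval_modByMonicHom hn, (hE'.map (CyclicCode.inversion S n)).mem_span_one_sub_iff]

theorem stmt8 (S : Type*) [CommRing S] [Fintype S] (n : ℕ) (hn : 0 < n)
    (E : AdjoinRoot ((X : S[X]) ^ n - 1)) (hE : E ^ 2 = E) :
    ∀ f : AdjoinRoot ((X : S[X]) ^ n - 1),
      (∀ g ∈ Ideal.span {E},
          ∑ k ∈ Finset.range n,
            (AdjoinRoot.modByMonicHom (monic_Xn_sub_one S n hn) f).coeff k *
              (AdjoinRoot.modByMonicHom (monic_Xn_sub_one S n hn) g).coeff k = 0) ↔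
        f ∈ Ideal.span
          {1 - Polynomial.aeval ((AdjoinRoot.root ((X : S[X]) ^ n - 1)) ^ (n - 1))
              (AdjoinRoot.modByMonicHom (monic_Xn_sub_one S n hn) E)} :=
  stmt8_general S n hn E hE
end

section
/- In R_q = R[x]/⟨x^q − 1⟩, let D = ε d₁ + (1−ε) d₂ and D' = ε d₂ + (1−ε) d₁ where ε is an idempotent of R and d₁, d₂ are the odd-like QR idempotents over F_p with d₁ + d₂ = 1 + (1/q)h and d₁d₂ = (1/q)h. Then the ideals Q = ⟨D⟩ and Q' = ⟨D'⟩ satisfy Q ∩ Q' = ⟨(1/q)h⟩ and Q + Q' = R_q. -/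
open Polynomial

/-- The ring `R = F_p[u]/⟨u^m - u⟩`. -/
abbrev Rring (p m : ℕ) := AdjoinRoot ((X : (ZMod p)[X]) ^ m - X)

/-- The ring `R_q = R[x]/⟨x^q - 1⟩`. -/
abbrev Rq (p m q : ℕ) := AdjoinRoot ((X : (Rring p m)[X]) ^ q - 1)

/-- The element `(1/q)·h = (1/q)(1 + x + ⋯ + x^{q-1})` of `R_q`. -/
noncomputable def Hq (p m q : ℕ) [Fact p.Prime] : Rq p m q :=
  AdjoinRoot.of _ (AdjoinRoot.of _ ((q : ZMod p)⁻¹)) *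
    ∑ k ∈ Finset.range q, (AdjoinRoot.root ((X : (Rring p m)[X]) ^ q - 1)) ^ k

/-!
Since `ε` and `1 - ε` are orthogonal idempotents, `D = ε d₁ + (1 - ε) d₂` and
`D' = ε d₂ + (1 - ε) d₁` are again idempotents, with `D D' = d₁ d₂ = (1/q) h` and
`D + D' = d₁ + d₂ = 1 + (1/q) h`. For idempotents the principal ideals satisfy
`⟨D⟩ ⊓ ⟨D'⟩ = ⟨D D'⟩` and `⟨D⟩ ⊔ ⟨D'⟩ = ⟨D + D' - D D'⟩ = ⟨1⟩`.
-/

section Idempotent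

variable {R : Type*} [CommRing R] {e f : R}

theorem Ideal.span_singleton_inf_span_singleton_of_isIdempotentElem (he : IsIdempotentElem e) :
    Ideal.span {e} ⊓ Ideal.span {f} = Ideal.span {e * f} := by
  refine le_antisymm ?_ (le_inf ?_ ?_)
  · rintro x ⟨hxe, hxf⟩
    obtain ⟨c, rfl⟩ := Ideal.mem_span_singleton'.mp hxe
    obtain ⟨d, hd⟩ := Ideal.mem_span_singleton'.mp hxf
    refine Ideal.mem_span_singleton'.mpr ⟨d, ?_⟩
    calc d * (e * f) = e * (f * d) := by ring
      _ = c * (e * e) := by rw [mul_comm f, hd]; ring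
      _ = c * e := by rw [he.eq]
  · exact Ideal.span_singleton_le_span_singleton.mpr (dvd_mul_right e f)
  · exact Ideal.span_singleton_le_span_singleton.mpr (dvd_mul_left f e)

theorem Ideal.span_singleton_sup_span_singleton_of_isIdempotentElem (he : IsIdempotentElem e)
    (hf : IsIdempotentElem f) :
    Ideal.span {e} ⊔ Ideal.span {f} = Ideal.span {e + f - e * f} := by
  refine le_antisymm (sup_le ?_ ?_) ?_
  · exact Ideal.span_singleton_le_span_singleton.mpr
      ⟨e, by linear_combination (f - 1) * he.eq⟩
  · exact Ideal.span_singleton_le_span_singleton.mpr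
      ⟨f, by linear_combination (e - 1) * hf.eq⟩
  · rw [Ideal.span_singleton_le_iff_mem]
    exact Ideal.sub_mem _
      (Submodule.add_mem_sup (Ideal.mem_span_singleton_self e) (Ideal.mem_span_singleton_self f))
      (Ideal.mul_mem_left _ e (Ideal.mem_sup_right (Ideal.mem_span_singleton_self f)))

theorem IsIdempotentElem.mul_add_one_sub_mul {a b : R} (he : IsIdempotentElem e)
    (ha : IsIdempotentElem a) (hb : IsIdempotentElem b) :
    IsIdempotentElem (e * a + (1 - e) * b) := by
  calc (e * a + (1 - e) * b) * (e * a + (1 - e) * b)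
      = e * e * (a * a) + 2 * (e * (1 - e)) * (a * b) + (1 - e) * (1 - e) * (b * b) := by ring
    _ = e * a + (1 - e) * b := by
      rw [he.eq, he.one_sub.eq, he.mul_one_sub_self, ha.eq, hb.eq]; ring

theorem IsIdempotentElem.mul_add_one_sub_mul_mul_swap (he : IsIdempotentElem e) (a b : R) :
    (e * a + (1 - e) * b) * (e * b + (1 - e) * a) = a * b := by
  linear_combination (a ^ 2 + b ^ 2 - 2 * a * b) * he.mul_one_sub_self

end Idempotent

theorem stmt16_general (p m q : ℕ) [Fact p.Prime]
    (ε : Rring p m) (hε : ε ^ 2 = ε)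
    (d₁ d₂ : Rq p m q) (hd₁ : d₁ ^ 2 = d₁) (hd₂ : d₂ ^ 2 = d₂)
    (hsum : d₁ + d₂ = 1 + Hq p m q) (hprod : d₁ * d₂ = Hq p m q) :
    Ideal.span {AdjoinRoot.of _ ε * d₁ + AdjoinRoot.of _ (1 - ε) * d₂} ⊓
        Ideal.span {AdjoinRoot.of _ ε * d₂ + AdjoinRoot.of _ (1 - ε) * d₁} =
      Ideal.span {Hq p m q} ∧
    Ideal.span {AdjoinRoot.of _ ε * d₁ + AdjoinRoot.of _ (1 - ε) * d₂} ⊔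
        Ideal.span {AdjoinRoot.of _ ε * d₂ + AdjoinRoot.of _ (1 - ε) * d₁} =
      (⊤ : Ideal (Rq p m q)) := by
  have he : IsIdempotentElem (AdjoinRoot.of ((X : (Rring p m)[X]) ^ q - 1) ε) :=
    IsIdempotentElem.map (by rwa [IsIdempotentElem, ← sq]) (AdjoinRoot.of _)
  have hd₁' : IsIdempotentElem d₁ := by rwa [IsIdempotentElem, ← sq]
  have hd₂' : IsIdempotentElem d₂ := by rwa [IsIdempotentElem, ← sq]
  rw [map_sub, map_one]
  constructor
  · rw [Ideal.span_singleton_inf_span_singleton_of_isIdempotentElem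
      (he.mul_add_one_sub_mul hd₁' hd₂'), he.mul_add_one_sub_mul_mul_swap, hprod]
  · rw [Ideal.span_singleton_sup_span_singleton_of_isIdempotentElem
      (he.mul_add_one_sub_mul hd₁' hd₂') (he.mul_add_one_sub_mul hd₂' hd₁'),
      he.mul_add_one_sub_mul_mul_swap, hprod, ← Ideal.span_singleton_one]
    congr 2
    linear_combination hsum

theorem stmt16 (p m q : ℕ) [Fact p.Prime] [Fact q.Prime] (hm : 2 ≤ m)
    (hdvd : (m - 1) ∣ (p - 1)) (hq2 : q ≠ 2) (hsq : IsSquare ((p : ZMod q)))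
    (ε : Rring p m) (hε : ε ^ 2 = ε)
    (d₁ d₂ : Rq p m q) (hd₁ : d₁ ^ 2 = d₁) (hd₂ : d₂ ^ 2 = d₂)
    (hsum : d₁ + d₂ = 1 + Hq p m q) (hprod : d₁ * d₂ = Hq p m q) :
    Ideal.span {AdjoinRoot.of _ ε * d₁ + AdjoinRoot.of _ (1 - ε) * d₂} ⊓
        Ideal.span {AdjoinRoot.of _ ε * d₂ + AdjoinRoot.of _ (1 - ε) * d₁} =
      Ideal.span {Hq p m q} ∧
    Ideal.span {AdjoinRoot.of _ ε * d₁ + AdjoinRoot.of _ (1 - ε) * d₂} ⊔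
        Ideal.span {AdjoinRoot.of _ ε * d₂ + AdjoinRoot.of _ (1 - ε) * d₁} =
      (⊤ : Ideal (Rq p m q)) :=
  stmt16_general p m q ε hε d₁ d₂ hd₁ hd₂ hsum hprod
end

section
/- In R_q = R[x]/⟨x^q − 1⟩, let E = ε e₁ + (1−ε) e₂ with ε ∈ R idempotent and e₁, e₂ the even-like QR idempotents satisfying e₁·(1/q)h = 0, e₂·(1/q)h = 0, e₁ + (1/q)h = d₁, e₂ + (1/q)h = d₂. Then ⟨E⟩ ∩ ⟨(1/q)h⟩ = {0} and ⟨E⟩ + ⟨(1/q)h⟩ = ⟨ε d₁ + (1−ε) d₂⟩. -/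
open Polynomial

/-! Everything rests on `e * h = 0` with `h` idempotent: multiplication by `h` is the identity
on `⟨h⟩` and zero on `⟨e⟩`, which separates the two ideals, and `(e + h) * h = h`,
`(e + h) * (1 - h) = e` recover both generators from `e + h`. -/

namespace Ideal

variable {R : Type*} [CommRing R] {e h : R}

theorem span_singleton_inf_span_singleton_eq_bot_of_mul_eq_zero
    (hh : IsIdempotentElem h) (heh : e * h = 0) :
    span {e} ⊓ span {h} = ⊥ := by
  refine eq_bot_iff.mpr fun z hz => ?_
  obtain ⟨⟨a, rfl⟩, ⟨b, hb⟩⟩ :=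
    And.imp mem_span_singleton'.mp mem_span_singleton'.mp (mem_inf.mp hz)
  have hzh : a * e * h = a * e := by
    rw [← hb, mul_assoc, hh.eq]
  rw [Submodule.mem_bot, ← hzh, mul_assoc, heh, mul_zero]

theorem span_singleton_sup_span_singleton_eq_of_mul_eq_zero
    (hh : IsIdempotentElem h) (heh : e * h = 0) :
    span {e} ⊔ span {h} = span {e + h} := by
  refine le_antisymm (sup_le ?_ ?_) ?_ <;> rw [span_singleton_le_iff_mem]
  · exact mem_span_singleton'.mpr ⟨1 - h, by
      rw [mul_comm, mul_sub, mul_one, add_mul, heh, hh.eq, zero_add, add_sub_cancel_right]⟩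
  · exact mem_span_singleton'.mpr ⟨h, by rw [mul_comm, add_mul, heh, hh.eq, zero_add]⟩
  · exact add_mem (mem_sup_left (mem_span_singleton_self e))
      (mem_sup_right (mem_span_singleton_self h))

end Ideal

theorem stmt17_general (p m q : ℕ) [Fact p.Prime]
    (ε : Rring p m)
    (d₁ d₂ e₁ e₂ : Rq p m q)
    (hH : Hq p m q ^ 2 = Hq p m q)
    (he₁H : e₁ * Hq p m q = 0) (he₂H : e₂ * Hq p m q = 0)
    (hd₁ : e₁ + Hq p m q = d₁) (hd₂ : e₂ + Hq p m q = d₂) :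
    Ideal.span {AdjoinRoot.of _ ε * e₁ + AdjoinRoot.of _ (1 - ε) * e₂} ⊓
        Ideal.span {Hq p m q} = (⊥ : Ideal (Rq p m q)) ∧
    Ideal.span {AdjoinRoot.of _ ε * e₁ + AdjoinRoot.of _ (1 - ε) * e₂} ⊔
        Ideal.span {Hq p m q} =
      Ideal.span {AdjoinRoot.of _ ε * d₁ + AdjoinRoot.of _ (1 - ε) * d₂} := by
  subst hd₁ hd₂
  set H := Hq p m q
  set ε' : Rq p m q := AdjoinRoot.of _ ε
  rw [map_sub, map_one]
  have hHH : IsIdempotentElem H := (sq H).symm.trans hH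
  have hEH : (ε' * e₁ + (1 - ε') * e₂) * H = 0 := by
    rw [add_mul, mul_assoc, mul_assoc, he₁H, he₂H, mul_zero, mul_zero, add_zero]
  have hsum : ε' * (e₁ + H) + (1 - ε') * (e₂ + H) = ε' * e₁ + (1 - ε') * e₂ + H := by ring
  exact ⟨Ideal.span_singleton_inf_span_singleton_eq_bot_of_mul_eq_zero hHH hEH,
    hsum ▸ Ideal.span_singleton_sup_span_singleton_eq_of_mul_eq_zero hHH hEH⟩

theorem stmt17 (p m q : ℕ) [Fact p.Prime] [Fact q.Prime] (hm : 2 ≤ m)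
    (hdvd : (m - 1) ∣ (p - 1)) (hq2 : q ≠ 2) (hsq : IsSquare ((p : ZMod q)))
    (ε : Rring p m) (hε : ε ^ 2 = ε)
    (d₁ d₂ e₁ e₂ : Rq p m q) (he₁ : e₁ ^ 2 = e₁) (he₂ : e₂ ^ 2 = e₂)
    (hH : Hq p m q ^ 2 = Hq p m q)
    (he₁H : e₁ * Hq p m q = 0) (he₂H : e₂ * Hq p m q = 0)
    (hd₁ : e₁ + Hq p m q = d₁) (hd₂ : e₂ + Hq p m q = d₂) :
    Ideal.span {AdjoinRoot.of _ ε * e₁ + AdjoinRoot.of _ (1 - ε) * e₂} ⊓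
        Ideal.span {Hq p m q} = (⊥ : Ideal (Rq p m q)) ∧
    Ideal.span {AdjoinRoot.of _ ε * e₁ + AdjoinRoot.of _ (1 - ε) * e₂} ⊔
        Ideal.span {Hq p m q} =
      Ideal.span {AdjoinRoot.of _ ε * d₁ + AdjoinRoot.of _ (1 - ε) * d₂} :=
  stmt17_general p m q ε d₁ d₂ e₁ e₂ hH he₁H he₂H hd₁ hd₂
end
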